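/- arXiv:2603.14708 — 2 statements merged into one kernel-verified Lean document; each statement's English description precedes it below -/
import Mathlib

section
/- Let z ∈ ℂ with z ≠ 0. Then there exist N₀ ∈ ℕ and C > 0 such that for all integers n ≥ N₀ one has h_n^{(1)}(z) ≠ 0 and |h_{n−2}^{(1)}(z)/h_n^{(1)}(z)| ≤ C/n²; that is, h_{n−2}^{(1)}(z)/h_n^{(1)}(z) = O(1/n²) as n → ∞. -/
open Complex

/-- Spherical Hankel function of the first kind (Rayleigh closed form). -/
noncomputable def sphHankel (n : ℕ) (z : ℂ) : ℂ :=
  (-Complex.I) ^ (n + 1) * (Complex.exp (Complex.I * z) / z) *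
    ∑ k ∈ Finset.range (n + 1),
      (Complex.I ^ k / ((Nat.factorial k : ℂ) * (2 * z) ^ k)) *
        ((Nat.factorial (n + k) : ℂ) / (Nat.factorial (n - k) : ℂ))

/-!
Reversing the Rayleigh sum (`k = n - j`) and factoring out its term `k = n` gives
`h_n(z) = -i e^{iz}/z · (2n)!/(n! (2z)^n) · T_n(z)` with
`T_n(z) = ∑_{j ≤ n} (-2iz)^j/j! · n^{(j)}/(2n)^{(j)}` (falling factorials).
Since `n^{(j)}/(2n)^{(j)} ≤ 2^{-j}` and it tends to `2^{-j}`, dominated convergence gives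
`T_n(z) → e^{-iz} ≠ 0`, while `|T_n(z)| ≤ e^{|z|}`. The leading factors of `h_{n+2}` and `h_n`
differ by exactly `(2n+1)(2n+3)/z²`, which is the source of the `n^{-2}` decay.
-/

open Filter Finset Topology
open scoped Nat

theorem Nat.two_pow_mul_descFactorial_le (n j : ℕ) :
    2 ^ j * n.descFactorial j ≤ (2 * n).descFactorial j := by
  induction j with
  | zero => simp
  | succ j ih =>
    rw [Nat.descFactorial_succ, Nat.descFactorial_succ, pow_succ]
    calc 2 ^ j * 2 * ((n - j) * n.descFactorial j)
        = (2 * (n - j)) * (2 ^ j * n.descFactorial j) := by ring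
      _ ≤ (2 * n - j) * (2 * n).descFactorial j :=
        Nat.mul_le_mul (by omega) ih

theorem tendsto_descFactorial_div_descFactorial_two_mul {𝕜 : Type*} [RCLike 𝕜] (j : ℕ) :
    Tendsto (fun n : ℕ ↦ (n.descFactorial j : 𝕜) / ((2 * n).descFactorial j))
      atTop (𝓝 ((1 / 2) ^ j)) := by
  induction j with
  | zero => simp
  | succ j ih =>
    have hfactor : Tendsto (fun n : ℕ ↦ ((n - j : ℕ) : 𝕜) / ((2 * n - j : ℕ) : 𝕜))
        atTop (𝓝 (1 / 2)) := by
      refine (tendsto_add_mul_div_add_mul_atTop_nhds (-j : 𝕜) (-j) 1 two_ne_zero).congr' ?_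
      filter_upwards [eventually_ge_atTop j] with n hn
      push_cast [hn, show j ≤ 2 * n by omega]
      ring
    rw [pow_succ']
    simp only [Nat.descFactorial_succ, Nat.cast_mul]
    refine (hfactor.mul ih).congr fun n ↦ ?_
    rw [mul_div_mul_comm]

noncomputable def sphHankelLeading (z : ℂ) (n : ℕ) : ℂ :=
  -I * (exp (I * z) / z) * ((2 * n)! / (n ! * (2 * z) ^ n))

noncomputable def sphHankelCorrectionTerm (z : ℂ) (n j : ℕ) : ℂ :=
  (-I * (2 * z)) ^ j / j ! * ((n.descFactorial j : ℂ) / (2 * n).descFactorial j)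

noncomputable def sphHankelCorrection (z : ℂ) (n : ℕ) : ℂ :=
  ∑ j ∈ range (n + 1), sphHankelCorrectionTerm z n j

section

variable {z : ℂ} {n j : ℕ}

theorem sphHankel_summand_sub_eq (hz : z ≠ 0) (hj : j ≤ n) :
    I ^ (n - j) / ((n - j)! * (2 * z) ^ (n - j)) * ((n + (n - j))! / (n - (n - j))! : ℂ) =
      I ^ n * ((2 * n)! / (n ! * (2 * z) ^ n)) * sphHankelCorrectionTerm z n j := by
  obtain ⟨k, rfl⟩ := Nat.exists_eq_add_of_le' hj
  have hfac₁ := Nat.factorial_mul_descFactorial hj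
  have hfac₂ := Nat.factorial_mul_descFactorial (show j ≤ 2 * (k + j) by omega)
  have hd₁ : ((k + j).descFactorial j : ℂ) ≠ 0 := by
    exact_mod_cast (Nat.descFactorial_pos.mpr hj).ne'
  have hd₂ : ((2 * (k + j)).descFactorial j : ℂ) ≠ 0 := by
    exact_mod_cast (Nat.descFactorial_pos.mpr (show j ≤ 2 * (k + j) by omega)).ne'
  simp only [Nat.add_sub_cancel, show k + j + k = 2 * (k + j) - j by omega,
    show k + j - k = j by omega] at hfac₁ ⊢
  unfold sphHankelCorrectionTerm
  rw [← hfac₁, ← hfac₂]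
  have hI : I ^ j * (-I) ^ j = 1 := by rw [← mul_pow]; simp
  push_cast
  rw [pow_add I, pow_add (2 * z), mul_pow (-I)]
  field_simp
  rw [mul_assoc _ (I ^ j), hI, mul_one]

theorem sphHankel_eq_leading_mul_correction (hz : z ≠ 0) :
    sphHankel n z = sphHankelLeading z n * sphHankelCorrection z n := by
  have hprefactor : (-I) ^ (n + 1) * I ^ n = -I := by
    rw [pow_succ, mul_right_comm, ← mul_pow]; simp
  rw [sphHankel, ← sum_range_reflect, sphHankelCorrection, mul_sum, mul_sum]
  refine sum_congr rfl fun j hj ↦ ?_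
  rw [Nat.add_sub_cancel, sphHankel_summand_sub_eq hz (Nat.lt_succ_iff.mp (mem_range.mp hj)),
    sphHankelLeading]
  linear_combination
    exp (I * z) / z * ((2 * n)! / (n ! * (2 * z) ^ n)) * sphHankelCorrectionTerm z n j * hprefactor

theorem sphHankelLeading_ne_zero (hz : z ≠ 0) : sphHankelLeading z n ≠ 0 := by
  unfold sphHankelLeading
  have := exp_ne_zero (I * z)
  have := I_ne_zero
  simp [hz, Nat.factorial_ne_zero]

theorem sphHankelLeading_add_two (hz : z ≠ 0) :
    sphHankelLeading z (n + 2) = (2 * n + 1) * (2 * n + 3) / z ^ 2 * sphHankelLeading z n := by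
  unfold sphHankelLeading
  rw [show 2 * (n + 2) = 2 * n + 1 + 1 + 1 + 1 by ring, show n + 2 = n + 1 + 1 from rfl]
  simp only [Nat.factorial_succ, pow_succ]
  have h₁ : (n + 1 : ℂ) ≠ 0 := by norm_cast
  have h₂ : (n + 1 + 1 : ℂ) ≠ 0 := by norm_cast
  push_cast
  field_simp
  ring

theorem sphHankel_div_sphHankel_add_two (hz : z ≠ 0) :
    sphHankel n z / sphHankel (n + 2) z =
      z ^ 2 / ((2 * n + 1) * (2 * n + 3) : ℕ) *
        (sphHankelCorrection z n / sphHankelCorrection z (n + 2)) := by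
  have hodd : ((2 * n + 1) * (2 * n + 3) : ℂ) ≠ 0 := by norm_cast
  rw [sphHankel_eq_leading_mul_correction hz, sphHankel_eq_leading_mul_correction hz,
    mul_div_mul_comm, sphHankelLeading_add_two hz]
  congr 1
  push_cast
  field_simp [sphHankelLeading_ne_zero hz]

theorem sphHankelCorrectionTerm_eq_zero_of_lt (h : n < j) :
    sphHankelCorrectionTerm z n j = 0 := by
  simp [sphHankelCorrectionTerm, Nat.descFactorial_eq_zero_iff_lt.mpr h]

theorem norm_sphHankelCorrectionTerm_le : ‖sphHankelCorrectionTerm z n j‖ ≤ ‖z‖ ^ j / j ! := by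
  have hratio : ‖(n.descFactorial j : ℂ) / (2 * n).descFactorial j‖ ≤ (1 / 2) ^ j := by
    rw [norm_div, Complex.norm_natCast, Complex.norm_natCast]
    rcases Nat.eq_zero_or_pos ((2 * n).descFactorial j) with h | h
    · simp [h]
    rw [div_le_iff₀ (by exact_mod_cast h), div_pow, one_pow, div_mul_eq_mul_div, one_mul,
      le_div_iff₀ (by positivity), mul_comm]
    exact_mod_cast Nat.two_pow_mul_descFactorial_le n j
  calc ‖sphHankelCorrectionTerm z n j‖
      = (2 * ‖z‖) ^ j / j ! * ‖(n.descFactorial j : ℂ) / (2 * n).descFactorial j‖ := by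
        simp [sphHankelCorrectionTerm, mul_comm]
    _ ≤ (2 * ‖z‖) ^ j / j ! * (1 / 2) ^ j := by gcongr
    _ = ‖z‖ ^ j / j ! := by rw [div_mul_eq_mul_div, ← mul_pow]; ring_nf

theorem tendsto_sphHankelCorrectionTerm (z : ℂ) (j : ℕ) :
    Tendsto (sphHankelCorrectionTerm z · j) atTop (𝓝 ((-I * z) ^ j / j !)) := by
  have hlim : (-I * z) ^ j / j ! = (-I * (2 * z)) ^ j / j ! * (1 / 2) ^ j := by
    rw [div_mul_eq_mul_div, ← mul_pow]; ring_nf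
  rw [hlim]
  exact tendsto_const_nhds.mul (tendsto_descFactorial_div_descFactorial_two_mul j)

theorem sphHankelCorrection_eq_tsum :
    sphHankelCorrection z n = ∑' j, sphHankelCorrectionTerm z n j :=
  (tsum_eq_sum fun _ hj ↦ sphHankelCorrectionTerm_eq_zero_of_lt
    (by simpa [Nat.lt_succ_iff] using hj)).symm

theorem tendsto_sphHankelCorrection (z : ℂ) :
    Tendsto (sphHankelCorrection z) atTop (𝓝 (exp (-I * z))) := by
  rw [Complex.exp_eq_exp_ℂ, NormedSpace.exp_eq_tsum_div]
  refine .congr (fun _ ↦ sphHankelCorrection_eq_tsum.symm) <|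
    tendsto_tsum_of_dominated_convergence (Real.summable_pow_div_factorial ‖z‖)
      (tendsto_sphHankelCorrectionTerm z) (.of_forall fun _ _ ↦ norm_sphHankelCorrectionTerm_le)

theorem norm_sphHankelCorrection_le : ‖sphHankelCorrection z n‖ ≤ Real.exp ‖z‖ :=
  calc ‖sphHankelCorrection z n‖ ≤ ∑ j ∈ range (n + 1), ‖sphHankelCorrectionTerm z n j‖ :=
        norm_sum_le _ _
    _ ≤ ∑ j ∈ range (n + 1), ‖z‖ ^ j / j ! :=
        sum_le_sum fun _ _ ↦ norm_sphHankelCorrectionTerm_le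
    _ ≤ Real.exp ‖z‖ := Real.sum_le_exp_of_nonneg (norm_nonneg z) _

theorem norm_sphHankel_div_sphHankel_add_two_le (hz : z ≠ 0) (hn : 1 ≤ n) :
    ‖sphHankel n z / sphHankel (n + 2) z‖ ≤
      ‖z‖ ^ 2 * Real.exp ‖z‖ / ‖sphHankelCorrection z (n + 2)‖ / ((n : ℝ) + 2) ^ 2 := by
  have hodd : ((n : ℝ) + 2) ^ 2 ≤ ((2 * n + 1) * (2 * n + 3) : ℕ) := by
    exact_mod_cast (show (n + 2) ^ 2 ≤ (2 * n + 1) * (2 * n + 3) by nlinarith)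
  rw [sphHankel_div_sphHankel_add_two hz, norm_mul, norm_div, norm_div, norm_pow,
    Complex.norm_natCast]
  calc ‖z‖ ^ 2 / ((2 * n + 1) * (2 * n + 3) : ℕ) *
        (‖sphHankelCorrection z n‖ / ‖sphHankelCorrection z (n + 2)‖)
      ≤ ‖z‖ ^ 2 / ((n : ℝ) + 2) ^ 2 *
        (Real.exp ‖z‖ / ‖sphHankelCorrection z (n + 2)‖) := by
        gcongr
        exact norm_sphHankelCorrection_le
    _ = _ := by ring

end

theorem sphHankel_two_step_ratio_asymptotic (z : ℂ) (hz : z ≠ 0) :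
    ∃ (N₀ : ℕ) (C : ℝ), 0 < C ∧ ∀ n : ℕ, N₀ ≤ n →
      sphHankel n z ≠ 0 ∧
      ‖sphHankel (n - 2) z / sphHankel n z‖ ≤ C / (n : ℝ) ^ 2 := by
  set L := ‖exp (-I * z)‖
  have hL : 0 < L := norm_pos_iff.mpr (exp_ne_zero _)
  obtain ⟨N, hN⟩ := eventually_atTop.mp <|
    (tendsto_sphHankelCorrection z).norm.eventually (eventually_ge_nhds (half_lt_self hL))
  refine ⟨N + 3, 2 * ‖z‖ ^ 2 * Real.exp ‖z‖ / L, by positivity, fun n hn ↦ ?_⟩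
  obtain ⟨m, rfl⟩ : ∃ m, n = m + 2 := ⟨n - 2, by omega⟩
  have hcorr : L / 2 ≤ ‖sphHankelCorrection z (m + 2)‖ := hN _ (by omega)
  have hcorr_pos : 0 < ‖sphHankelCorrection z (m + 2)‖ := (half_pos hL).trans_le hcorr
  refine ⟨?_, ?_⟩
  · rw [sphHankel_eq_leading_mul_correction hz]
    exact mul_ne_zero (sphHankelLeading_ne_zero hz) (norm_pos_iff.mp hcorr_pos)
  rw [Nat.add_sub_cancel, Nat.cast_add, Nat.cast_two]
  calc ‖sphHankel m z / sphHankel (m + 2) z‖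
      ≤ ‖z‖ ^ 2 * Real.exp ‖z‖ / ‖sphHankelCorrection z (m + 2)‖ / ((m : ℝ) + 2) ^ 2 :=
        norm_sphHankel_div_sphHankel_add_two_le hz (by omega)
    _ ≤ ‖z‖ ^ 2 * Real.exp ‖z‖ / (L / 2) / ((m : ℝ) + 2) ^ 2 := by gcongr
    _ = 2 * ‖z‖ ^ 2 * Real.exp ‖z‖ / L / ((m : ℝ) + 2) ^ 2 := by ring
end

section
/- Let κ₀ ∈ ℂ with κ₀ ≠ 0 and let R > 0. Then there exist N₀ ∈ ℕ and C > 0 such that for every integer n ≥ N₀: h_n^{(1)}(κ₀R) ≠ 0, the function κ ↦ z_n^{(1)}(κR)/(κ·h_n^{(1)}(κR)) is complex differentiable at κ₀, and its derivative F_n′(κ₀) satisfies |F_n′(κ₀) − n/κ₀²| ≤ C/n; that is, (z_n^{(1)}(κR)/(κ·h_n^{(1)}(κR)))′ evaluated at κ₀ equals n/κ₀² + O(1/n) as n → ∞. -/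
/-!
Reindexing the Rayleigh sum by `j = n - k` gives `h_n(z) = c_n e^{iz} Q_n(z) / z^{n+1}` with a
polynomial `Q_n(z) = ∑ d_{n,j} z^j`, `Q_n(0) = 1`. With `A_n = Q_n' + i Q_n` this turns the
quotient into `z_n(κR) / (κ h_n(κR)) = R A_n(κR) / Q_n(κR) - n / κ`, whose derivative is
`n / κ² + R² (A_n' Q_n - A_n Q_n') / Q_n²`.

The coefficients of `Q_n` are dominated by `2^j / j!`, and the recursion between consecutive
`d_{n,j}` shows that the `j`-th coefficient of `A_n` is `i j / (2n - j) · d_{n,j}`, which carries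
a factor `1/n`. Hence `Q_n, Q_n'` are bounded and `A_n, A_n'` are `O(1/n)` on compact sets. Since
`(e^{iz} Q_n)' = e^{iz} A_n`, also `e^{iz} Q_n(z) = 1 + O(1/n)`, which keeps `Q_n` away from `0`
for large `n`; the correction term is therefore `O(1/n)`.
-/

open Complex

/-- `z_n^{(1)}(z) = h_n^{(1)}(z) + z * h_n^{(1)'}(z)`. -/
noncomputable def zfun (n : ℕ) (z : ℂ) : ℂ :=
  sphHankel n z + z * deriv (sphHankel n) z

open Polynomial Finset Nat Filter Topology

noncomputable section

/-- The factor `choose n j / choose (2n) j` makes the coefficient vanish for `j > n`. -/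
def hankelCoeff (n j : ℕ) : ℂ :=
  (-2 * I) ^ j / j ! * ((n.choose j : ℂ) / (2 * n).choose j)

def hankelPoly (n : ℕ) : ℂ[X] :=
  ∑ j ∈ range (n + 1), monomial j (hankelCoeff n j)

def hankelPolyDefect (n : ℕ) : ℂ[X] :=
  derivative (hankelPoly n) + C I * hankelPoly n

def hankelConst (n : ℕ) : ℂ :=
  -I * (2 * n)! / (n ! * 2 ^ n)

end

theorem hankelCoeff_eq_zero {n j : ℕ} (h : n < j) : hankelCoeff n j = 0 := by
  simp [hankelCoeff, Nat.choose_eq_zero_of_lt h]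

theorem hankelCoeff_zero (n : ℕ) : hankelCoeff n 0 = 1 := by
  simp [hankelCoeff]

theorem norm_hankelCoeff_le (n j : ℕ) : ‖hankelCoeff n j‖ ≤ 2 ^ j / j ! := by
  have hchoose : (n.choose j : ℝ) / (2 * n).choose j ≤ 1 :=
    div_le_one_of_le₀ (mod_cast Nat.choose_le_choose j (by omega)) (by positivity)
  rw [hankelCoeff, norm_mul, norm_div, norm_div]
  simp only [norm_pow, norm_mul, norm_neg, Complex.norm_ofNat, Complex.norm_I, mul_one,
    Complex.norm_natCast]
  exact mul_le_of_le_one_right (by positivity) hchoose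

theorem hankelCoeff_succ_mul (n j : ℕ) :
    (j + 1) * hankelCoeff n (j + 1) * (2 * n - j) = -2 * I * (n - j) * hankelCoeff n j := by
  rcases lt_trichotomy j n with hj | rfl | hj
  · have e1 := congrArg (Nat.cast (R := ℂ)) (Nat.choose_succ_right_eq n j)
    have e2 := congrArg (Nat.cast (R := ℂ)) (Nat.choose_succ_right_eq (2 * n) j)
    push_cast [Nat.cast_sub hj.le, Nat.cast_sub (by omega : j ≤ 2 * n)] at e1 e2
    have hb : ((2 * n).choose j : ℂ) ≠ 0 := mod_cast (Nat.choose_pos (by omega)).ne'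
    have hb' : ((2 * n).choose (j + 1) : ℂ) ≠ 0 := mod_cast (Nat.choose_pos (by omega)).ne'
    have hj1 : (j + 1 : ℂ) ≠ 0 := Nat.cast_add_one_ne_zero j
    have hf : (j ! : ℂ) ≠ 0 := mod_cast j.factorial_ne_zero
    unfold hankelCoeff
    rw [Nat.factorial_succ, pow_succ]
    push_cast
    field_simp
    apply mul_left_cancel₀ hj1
    linear_combination
      -(2 * n - j : ℂ) * ((2 * n).choose j : ℂ) * e1 + (n - j : ℂ) * (n.choose j : ℂ) * e2
  · simp [hankelCoeff_eq_zero (Nat.lt_succ_self j)]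
  · simp [hankelCoeff_eq_zero hj, hankelCoeff_eq_zero (Nat.lt_succ_of_lt hj)]

theorem coeff_hankelPoly (n j : ℕ) : (hankelPoly n).coeff j = hankelCoeff n j := by
  rw [hankelPoly, finsetSum_coeff]
  simp_rw [coeff_monomial]
  rw [sum_ite_eq', ite_eq_left_iff, mem_range]
  exact fun hj => (hankelCoeff_eq_zero (by omega)).symm

theorem eval_hankelPoly (n : ℕ) (z : ℂ) :
    (hankelPoly n).eval z = ∑ j ∈ range (n + 1), hankelCoeff n j * z ^ j := by
  simp [hankelPoly, eval_finsetSum]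

theorem coeff_hankelPolyDefect_mul (n j : ℕ) :
    (hankelPolyDefect n).coeff j * (2 * n - j) = I * j * hankelCoeff n j := by
  rw [hankelPolyDefect, coeff_add, coeff_derivative, coeff_C_mul, coeff_hankelPoly,
    coeff_hankelPoly]
  linear_combination hankelCoeff_succ_mul n j

theorem sphHankel_eq {n : ℕ} {z : ℂ} (hz : z ≠ 0) :
    sphHankel n z = hankelConst n * exp (I * z) * (hankelPoly n).eval z / z ^ (n + 1) := by
  have hsum : ∑ k ∈ range (n + 1), I ^ k / (k ! * (2 * z) ^ k) * ((n + k)! / (n - k)! : ℂ)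
      = ∑ j ∈ range (n + 1),
          I ^ n * (2 * n)! / (n ! * 2 ^ n * z ^ n) * (hankelCoeff n j * z ^ j) := by
    rw [← sum_range_reflect]
    refine sum_congr rfl fun j hj => ?_
    obtain ⟨k, rfl⟩ : ∃ k, n = j + k := ⟨n - j, by have := mem_range.mp hj; omega⟩
    have e1 : j + k + 1 - 1 - j = k := by omega
    have e2 : j + k - k = j := by omega
    have e3 : 2 * (j + k) - j = j + k + k := by omega
    rw [e1, e2, hankelCoeff, Nat.cast_choose ℂ (by omega : j ≤ j + k),
      Nat.cast_choose ℂ (by omega : j ≤ 2 * (j + k)), e3, Nat.add_sub_cancel_left]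
    have hI : I ^ (j + k) * (-2 * I) ^ j = 2 ^ j * I ^ k := by
      rw [show I ^ (j + k) * (-2 * I) ^ j = (-2 * (I * I)) ^ j * I ^ k by ring, I_mul_I]
      norm_num
    have h1 : ((j + k)! : ℂ) ≠ 0 := mod_cast (j + k).factorial_ne_zero
    have h2 : ((2 * (j + k))! : ℂ) ≠ 0 := mod_cast (2 * (j + k)).factorial_ne_zero
    field_simp
    congr 1
    linear_combination -(((j + k + k)! : ℂ) * 2 ^ k * z ^ (j + k)) * hI
  rw [sphHankel, hsum, ← mul_sum, eval_hankelPoly, hankelConst]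
  have hn : (n ! : ℂ) ≠ 0 := mod_cast n.factorial_ne_zero
  have hI : (-I) ^ (n + 1) * I ^ n = -I := by
    rw [show (-I) ^ (n + 1) * I ^ n = -I * (-(I * I)) ^ n by ring, I_mul_I, neg_neg, one_pow,
      mul_one]
  field_simp
  linear_combination
    ((2 * n)! * z ^ (n + 1) * ∑ j ∈ range (n + 1), hankelCoeff n j * z ^ j) * hI

theorem hankelConst_ne_zero (n : ℕ) : hankelConst n ≠ 0 := by
  have : ((2 * n)! : ℂ) ≠ 0 := mod_cast (2 * n).factorial_ne_zero
  simp [hankelConst, this, I_ne_zero, Nat.factorial_ne_zero]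

theorem sphHankel_ne_zero {n : ℕ} {z : ℂ} (hz : z ≠ 0) (hQ : (hankelPoly n).eval z ≠ 0) :
    sphHankel n z ≠ 0 := by
  rw [sphHankel_eq hz]
  exact div_ne_zero (mul_ne_zero (mul_ne_zero (hankelConst_ne_zero n) (exp_ne_zero _)) hQ)
    (pow_ne_zero _ hz)

theorem hasDerivAt_exp_mul_eval_hankelPoly (n : ℕ) (z : ℂ) :
    HasDerivAt (fun w => exp (I * w) * (hankelPoly n).eval w)
      (exp (I * z) * (hankelPolyDefect n).eval z) z := by
  have hexp : HasDerivAt (fun w => exp (I * w)) (exp (I * z) * I) z := by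
    simpa using ((hasDerivAt_id z).const_mul I).cexp
  refine (hexp.fun_mul ((hankelPoly n).hasDerivAt z)).congr_deriv ?_
  rw [hankelPolyDefect, eval_add, eval_mul, eval_C]
  ring

theorem zfun_div_sphHankel {n : ℕ} {w : ℂ} (hw : w ≠ 0) (hQ : (hankelPoly n).eval w ≠ 0) :
    zfun n w / sphHankel n w = w * (hankelPolyDefect n).eval w / (hankelPoly n).eval w - n := by
  have hev : sphHankel n =ᶠ[𝓝 w]
      fun z => hankelConst n * (exp (I * z) * (hankelPoly n).eval z) / z ^ (n + 1) := by
    filter_upwards [eventually_ne_nhds hw] with z hz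
    rw [sphHankel_eq hz, mul_assoc]
  have hderiv := (((hasDerivAt_exp_mul_eval_hankelPoly n w).const_mul (hankelConst n)).div
    (hasDerivAt_pow (n + 1) w) (pow_ne_zero _ hw)).congr_of_eventuallyEq hev
  rw [zfun, hderiv.deriv, sphHankel_eq hw, Nat.add_sub_cancel]
  push_cast
  have := hankelConst_ne_zero n
  have := exp_ne_zero (I * w)
  field_simp
  ring

theorem norm_eval_le_of_norm_coeff_le {𝕜 : Type*} [NormedField 𝕜] {p : 𝕜[X]}
    {B s r : ℝ} (hs : 0 ≤ s) (hp : ∀ j, ‖p.coeff j‖ ≤ B * s ^ j / j !) {w : 𝕜}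
    (hw : ‖w‖ ≤ r) :
    ‖p.eval w‖ ≤ B * Real.exp (s * r) := by
  have hr : 0 ≤ r := (norm_nonneg w).trans hw
  have hB : 0 ≤ B := by simpa using (norm_nonneg _).trans (hp 0)
  rw [eval_eq_sum_range]
  calc ‖∑ j ∈ range (p.natDegree + 1), p.coeff j * w ^ j‖
      ≤ ∑ j ∈ range (p.natDegree + 1), B * ((s * r) ^ j / j !) := by
        refine (norm_sum_le _ _).trans (sum_le_sum fun j _ => ?_)
        calc ‖p.coeff j * w ^ j‖ ≤ B * s ^ j / j ! * r ^ j := by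
              rw [norm_mul, norm_pow]
              exact mul_le_mul (hp j) (pow_le_pow_left₀ (norm_nonneg w) hw j) (by positivity)
                (by positivity)
          _ = B * ((s * r) ^ j / j !) := by ring
    _ = B * ∑ j ∈ range (p.natDegree + 1), (s * r) ^ j / j ! := (mul_sum _ _ _).symm
    _ ≤ B * Real.exp (s * r) :=
        mul_le_mul_of_nonneg_left (Real.sum_le_exp_of_nonneg (by positivity) _) hB

theorem norm_coeff_derivative_le {p : ℂ[X]} {B s : ℝ}
    (hp : ∀ j, ‖p.coeff j‖ ≤ B * s ^ j / j !) (j : ℕ) :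
    ‖(derivative p).coeff j‖ ≤ B * s * s ^ j / j ! := by
  have hj : ‖(j : ℂ) + 1‖ = j + 1 := by exact_mod_cast Complex.norm_natCast (j + 1)
  rw [coeff_derivative, norm_mul, hj]
  calc ‖p.coeff (j + 1)‖ * (j + 1) ≤ B * s ^ (j + 1) / (j + 1)! * (j + 1) :=
        mul_le_mul_of_nonneg_right (hp (j + 1)) (by positivity)
    _ = B * s * s ^ j / j ! := by
        rw [Nat.factorial_succ]
        push_cast
        field_simp
        ring

theorem norm_coeff_hankelPoly_le (n j : ℕ) : ‖(hankelPoly n).coeff j‖ ≤ 4 ^ j / j ! := by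
  rw [coeff_hankelPoly]
  exact (norm_hankelCoeff_le n j).trans (by gcongr; norm_num)

theorem norm_coeff_hankelPolyDefect_le {n : ℕ} (hn : n ≠ 0) (j : ℕ) :
    ‖(hankelPolyDefect n).coeff j‖ ≤ (n : ℝ)⁻¹ * 4 ^ j / j ! := by
  rcases le_or_gt j n with hj | hj
  · have hm : (n : ℝ) ≤ ‖(2 * n - j : ℂ)‖ := by
      have hcast : ((2 * n - j : ℕ) : ℂ) = 2 * n - j := by
        push_cast [Nat.cast_sub (by omega : j ≤ 2 * n)]; ring
      rw [← hcast, Complex.norm_natCast]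
      exact_mod_cast (by omega : n ≤ 2 * n - j)
    have hmul : ‖(hankelPolyDefect n).coeff j‖ * ‖(2 * n - j : ℂ)‖
        = j * ‖hankelCoeff n j‖ := by
      simpa using congrArg norm (coeff_hankelPolyDefect_mul n j)
    rw [mul_div_assoc, inv_mul_eq_div, le_div_iff₀ (by positivity)]
    calc ‖(hankelPolyDefect n).coeff j‖ * n
        ≤ ‖(hankelPolyDefect n).coeff j‖ * ‖(2 * n - j : ℂ)‖ :=
          mul_le_mul_of_nonneg_left hm (norm_nonneg _)
      _ = j * ‖hankelCoeff n j‖ := hmul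
      _ ≤ 2 ^ j * (2 ^ j / j !) :=
          mul_le_mul (mod_cast Nat.lt_two_pow_self.le) (norm_hankelCoeff_le n j) (norm_nonneg _)
            (by positivity)
      _ = 4 ^ j / j ! := by rw [← mul_div_assoc, ← mul_pow]; norm_num
  · rw [hankelPolyDefect, coeff_add, coeff_derivative, coeff_C_mul, coeff_hankelPoly,
      coeff_hankelPoly, hankelCoeff_eq_zero hj, hankelCoeff_eq_zero (by omega)]
    simp only [zero_mul, mul_zero, add_zero, norm_zero]
    positivity

theorem norm_exp_I_mul_le (z : ℂ) : ‖exp (I * z)‖ ≤ Real.exp ‖z‖ :=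
  (norm_exp_le_exp_norm _).trans_eq (by simp)

theorem norm_exp_mul_eval_hankelPoly_sub_one_le {n : ℕ} (hn : n ≠ 0) {w : ℂ} {r : ℝ}
    (hw : ‖w‖ ≤ r) :
    ‖exp (I * w) * (hankelPoly n).eval w - 1‖ ≤ (n : ℝ)⁻¹ * Real.exp (5 * r) * r := by
  have hr : 0 ≤ r := (norm_nonneg w).trans hw
  have hderiv_le : ∀ z ∈ Metric.closedBall (0 : ℂ) r,
      ‖exp (I * z) * (hankelPolyDefect n).eval z‖ ≤ (n : ℝ)⁻¹ * Real.exp (5 * r) := by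
    intro z hz
    rw [mem_closedBall_zero_iff] at hz
    have hexp : ‖exp (I * z)‖ ≤ Real.exp r :=
      (norm_exp_I_mul_le z).trans (Real.exp_le_exp.mpr hz)
    calc ‖exp (I * z) * (hankelPolyDefect n).eval z‖
        ≤ Real.exp r * ((n : ℝ)⁻¹ * Real.exp (4 * r)) := by
          rw [norm_mul]
          exact mul_le_mul hexp (norm_eval_le_of_norm_coeff_le (by norm_num)
            (norm_coeff_hankelPolyDefect_le hn) hz) (norm_nonneg _) (Real.exp_nonneg _)
      _ = (n : ℝ)⁻¹ * Real.exp (5 * r) := by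
          rw [mul_left_comm, ← Real.exp_add]; ring_nf
  have hmvt := (convex_closedBall (0 : ℂ) r).norm_image_sub_le_of_norm_hasDerivWithin_le
    (fun z _ => (hasDerivAt_exp_mul_eval_hankelPoly n z).hasDerivWithinAt) hderiv_le
    (Metric.mem_closedBall_self hr) (mem_closedBall_zero_iff.mpr hw)
  rw [mul_zero, Complex.exp_zero, one_mul, ← coeff_zero_eq_eval_zero, coeff_hankelPoly,
    hankelCoeff_zero, sub_zero] at hmvt
  exact hmvt.trans (mul_le_mul_of_nonneg_left hw (by positivity))

theorem le_norm_eval_hankelPoly {n : ℕ} (hn : n ≠ 0) {w : ℂ} {r : ℝ} (hw : ‖w‖ ≤ r)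
    (hlarge : 2 * r * Real.exp (5 * r) ≤ n) :
    Real.exp (-r) / 2 ≤ ‖(hankelPoly n).eval w‖ := by
  have hclose : ‖exp (I * w) * (hankelPoly n).eval w - 1‖ ≤ 1 / 2 := by
    refine (norm_exp_mul_eval_hankelPoly_sub_one_le hn hw).trans ?_
    rw [mul_assoc, inv_mul_le_iff₀ (by positivity)]
    linarith
  have hexp : ‖exp (I * w)‖ ≤ Real.exp r :=
    (norm_exp_I_mul_le w).trans (Real.exp_le_exp.mpr hw)
  have hhalf : 1 / 2 ≤ Real.exp r * ‖(hankelPoly n).eval w‖ := by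
    have := norm_sub_norm_le (1 : ℂ) (exp (I * w) * (hankelPoly n).eval w)
    rw [norm_sub_rev, norm_one, norm_mul] at this
    nlinarith [norm_nonneg ((hankelPoly n).eval w)]
  calc Real.exp (-r) / 2 = Real.exp (-r) * (1 / 2) := by ring
    _ ≤ Real.exp (-r) * (Real.exp r * ‖(hankelPoly n).eval w‖) := by gcongr
    _ = ‖(hankelPoly n).eval w‖ := by
        rw [Real.exp_neg, inv_mul_cancel_left₀ (Real.exp_pos r).ne']

theorem norm_wronskian_hankelPoly_le {n : ℕ} (hn : n ≠ 0) {w : ℂ} {r : ℝ}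
    (hw : ‖w‖ ≤ r) :
    ‖(derivative (hankelPolyDefect n)).eval w * (hankelPoly n).eval w
        - (hankelPolyDefect n).eval w * (derivative (hankelPoly n)).eval w‖
      ≤ 8 * (n : ℝ)⁻¹ * Real.exp (4 * r) ^ 2 := by
  have hA := norm_coeff_hankelPolyDefect_le hn
  have hQ : ∀ j, ‖(hankelPoly n).coeff j‖ ≤ 1 * 4 ^ j / j ! := by
    simpa using norm_coeff_hankelPoly_le n
  have hA' := norm_eval_le_of_norm_coeff_le (by norm_num) (norm_coeff_derivative_le hA) hw
  have hQ' := norm_eval_le_of_norm_coeff_le (by norm_num) (norm_coeff_derivative_le hQ) hw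
  replace hA := norm_eval_le_of_norm_coeff_le (by norm_num) hA hw
  replace hQ := norm_eval_le_of_norm_coeff_le (by norm_num) hQ hw
  calc _ ≤ _ := norm_sub_le _ _
    _ ≤ (n : ℝ)⁻¹ * 4 * Real.exp (4 * r) * (1 * Real.exp (4 * r))
        + (n : ℝ)⁻¹ * Real.exp (4 * r) * (1 * 4 * Real.exp (4 * r)) := by
      rw [norm_mul, norm_mul]
      gcongr
    _ = 8 * (n : ℝ)⁻¹ * Real.exp (4 * r) ^ 2 := by ring

theorem hasDerivAt_zfun_div {n : ℕ} {R κ₀ : ℂ} (hκ₀ : κ₀ ≠ 0) (hR : R ≠ 0)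
    (hQ : (hankelPoly n).eval (κ₀ * R) ≠ 0) :
    HasDerivAt (fun κ => zfun n (κ * R) / (κ * sphHankel n (κ * R)))
      (R ^ 2 * ((derivative (hankelPolyDefect n)).eval (κ₀ * R) * (hankelPoly n).eval (κ₀ * R)
          - (hankelPolyDefect n).eval (κ₀ * R) * (derivative (hankelPoly n)).eval (κ₀ * R))
        / (hankelPoly n).eval (κ₀ * R) ^ 2 + n / κ₀ ^ 2) κ₀ := by
  have hQ_near : ∀ᶠ κ in 𝓝 κ₀, (hankelPoly n).eval (κ * R) ≠ 0 :=
    (((hankelPoly n).continuous.comp (continuous_mul_const R)).continuousAt).eventually_ne hQ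
  have hev : (fun κ => zfun n (κ * R) / (κ * sphHankel n (κ * R))) =ᶠ[𝓝 κ₀]
      fun κ => R * ((hankelPolyDefect n).eval (κ * R) / (hankelPoly n).eval (κ * R))
        - n * κ⁻¹ := by
    filter_upwards [eventually_ne_nhds hκ₀, hQ_near] with κ hκ hQκ
    rw [div_mul_eq_div_div_swap, zfun_div_sphHankel (mul_ne_zero hκ hR) hQκ]
    field_simp
  have hscale : HasDerivAt (fun κ => κ * R) R κ₀ := by
    simpa using (hasDerivAt_id κ₀).mul_const R
  have hAQ := (((hankelPolyDefect n).hasDerivAt _).comp κ₀ hscale).div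
    (((hankelPoly n).hasDerivAt _).comp κ₀ hscale) hQ
  simp only [Function.comp_def] at hAQ
  refine (((hAQ.const_mul R).sub ((hasDerivAt_inv hκ₀).const_mul (n : ℂ))).congr_deriv ?_)
    |>.congr_of_eventuallyEq hev
  field_simp
  ring

theorem dtn_coeff_V_deriv_asymptotic (κ₀ : ℂ) (hκ₀ : κ₀ ≠ 0) (R : ℝ) (hR : 0 < R) :
    ∃ (N₀ : ℕ) (C : ℝ), 0 < C ∧ ∀ n : ℕ, N₀ ≤ n →
      sphHankel n (κ₀ * R) ≠ 0 ∧
      DifferentiableAt ℂ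
        (fun κ : ℂ => zfun n (κ * R) / (κ * sphHankel n (κ * R))) κ₀ ∧
      ‖deriv (fun κ : ℂ => zfun n (κ * R) / (κ * sphHankel n (κ * R))) κ₀
          - (n : ℂ) / κ₀ ^ 2‖ ≤ C / n := by
  set r := ‖κ₀ * R‖
  refine ⟨⌈2 * r * Real.exp (5 * r)⌉₊ + 1, 32 * R ^ 2 * Real.exp (10 * r), by positivity,
    fun n hn => ?_⟩
  have hn0 : n ≠ 0 := by omega
  have hlarge : 2 * r * Real.exp (5 * r) ≤ n :=
    (Nat.le_ceil _).trans (mod_cast (by omega : ⌈2 * r * Real.exp (5 * r)⌉₊ ≤ n))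
  have hQ := le_norm_eval_hankelPoly hn0 le_rfl hlarge
  have hQ0 : (hankelPoly n).eval (κ₀ * R) ≠ 0 :=
    norm_pos_iff.mp ((div_pos (Real.exp_pos _) two_pos).trans_le hQ)
  have hF := hasDerivAt_zfun_div hκ₀ (ofReal_ne_zero.mpr hR.ne') hQ0
  refine ⟨sphHankel_ne_zero (mul_ne_zero hκ₀ (ofReal_ne_zero.mpr hR.ne')) hQ0,
    hF.differentiableAt, ?_⟩
  rw [hF.deriv, add_sub_cancel_right, norm_div, norm_mul, norm_pow, norm_pow, norm_real,
    Real.norm_of_nonneg hR.le]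
  calc _ ≤ R ^ 2 * (8 * (n : ℝ)⁻¹ * Real.exp (4 * r) ^ 2) / (Real.exp (-r) / 2) ^ 2 := by
        gcongr
        exact norm_wronskian_hankelPoly_le hn0 le_rfl
    _ = 32 * R ^ 2 * Real.exp (10 * r) / n := by
        have h10 : Real.exp (10 * r) = Real.exp (4 * r) ^ 2 * Real.exp r ^ 2 := by
          rw [sq, sq, ← Real.exp_add, ← Real.exp_add, ← Real.exp_add]; ring_nf
        rw [h10, Real.exp_neg]
        field_simp
        ring
end
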